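/- arXiv:1112.3262 — 3 statements merged into one kernel-verified Lean document; each statement's English description precedes it below -/
import Mathlib

section
/- If f ∈ C^{p+1}([a,b]) with f^{(k)}(a) = 0 for 0 ≤ k ≤ p, and 0 < α < 1, then ᶜD₊^α f ∈ C^p([a,b]) and (d^k/dt^k)(ᶜD₊^α f)(a) = 0 for 0 ≤ k ≤ p−1; moreover (d^k/dt^k)(ᶜD₊^α f) = I₊^{1−α} f^{(k+1)} for 1 ≤ k ≤ p. -/
/-! If `g` is `C¹` and `g a = 0`, extending `g` by zero to the left of `a` gives a Lipschitz
function `ĝ`, and `∫_a^t (t - τ)^(γ-1) g τ dτ = ∫_0^c s^(γ-1) ĝ(t - s) ds` for `a ≤ t ≤ a + c`.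
This integrand is Lipschitz in `t` with an integrable constant, so it can be differentiated under
the integral sign, which gives `(I^γ g)' = I^γ g'`. Applied to `g = f^(k+1)`, which vanishes at `a`
for `k < p`, this identifies the derivatives of `ᶜD^α f = I^(1-α) f'`. The last one,
`I^(1-α) f^(p+1)`, is continuous because the substitution `τ = t - (t - a) v` rewrites
`∫_a^t (t - τ)^(γ-1) h τ dτ` as `(t - a)^γ ∫_0^1 v^(γ-1) h(t - (t - a) v) dv`, an integral over a
fixed interval with an integrable dominating function. -/

open MeasureTheory intervalIntegral Set

/-- Left Riemann-Liouville fractional integral on `[a, ·]`. -/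
noncomputable def fracInt (a β : ℝ) (f : ℝ → ℝ) (t : ℝ) : ℝ :=
  (1 / Real.Gamma β) * ∫ τ in a..t, (t - τ) ^ (β - 1) * f τ

/-- Left Riemann-Liouville fractional derivative of order `α ∈ [0,1)`. -/
noncomputable def rlDeriv (a α : ℝ) (f : ℝ → ℝ) : ℝ → ℝ :=
  deriv (fracInt a (1 - α) f)

/-- Left Caputo fractional derivative of order `α ∈ [0,1)`. -/
noncomputable def caputoDeriv (a α : ℝ) (f : ℝ → ℝ) : ℝ → ℝ :=
  fracInt a (1 - α) (deriv f)

/-- Right Riemann-Liouville fractional integral on `[·, b]`. -/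
noncomputable def fracIntR (b β : ℝ) (f : ℝ → ℝ) (t : ℝ) : ℝ :=
  (1 / Real.Gamma β) * ∫ τ in t..b, (τ - t) ^ (β - 1) * f τ

/-- Right Riemann-Liouville fractional derivative of order `α ∈ [0,1)`. -/
noncomputable def rlDerivR (b α : ℝ) (f : ℝ → ℝ) (t : ℝ) : ℝ :=
  - deriv (fracIntR b (1 - α) f) t

/-- Right Caputo fractional derivative of order `α ∈ [0,1)`. -/
noncomputable def caputoDerivR (b α : ℝ) (f : ℝ → ℝ) (t : ℝ) : ℝ :=
  - fracIntR b (1 - α) (deriv f) t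

open Filter Topology

theorem intervalIntegral_rpow_mul_indicator_Ioi_sub (h : ℝ → ℝ) {a c t γ : ℝ}
    (hat : a ≤ t) (htc : t ≤ a + c) :
    ∫ s in 0..c, s ^ (γ - 1) * (Ioi a).indicator h (t - s)
      = ∫ τ in a..t, (t - τ) ^ (γ - 1) * h τ := by
  have hsub := intervalIntegral.integral_comp_sub_left
    (fun τ => (t - τ) ^ (γ - 1) * (Ioi a).indicator h τ) (a := 0) (b := c) t
  simp only [sub_sub_cancel, sub_zero] at hsub
  rw [hsub, intervalIntegral.integral_of_le (by linarith), intervalIntegral.integral_of_le hat]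
  simp_rw [← indicator_mul_right (Ioi a) (fun τ => (t - τ) ^ (γ - 1))]
  rw [setIntegral_indicator measurableSet_Ioi, Ioc_inter_Ioi, max_eq_right (by linarith)]

theorem hasDerivAt_indicator_Ioi {g : ℝ → ℝ} {a x : ℝ} (hg : DifferentiableAt ℝ g x)
    (hx : x ≠ a) :
    HasDerivAt ((Ioi a).indicator g) ((Ioi a).indicator (deriv g) x) x := by
  rcases hx.lt_or_gt with hlt | hgt
  · rw [indicator_of_notMem (by simpa using hlt.le)]
    refine (hasDerivAt_const x (0 : ℝ)).congr_of_eventuallyEq ?_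
    filter_upwards [Iio_mem_nhds hlt] with y hy
    exact indicator_of_notMem (by simpa using le_of_lt hy) g
  · rw [indicator_of_mem (show x ∈ Ioi a from hgt)]
    refine hg.hasDerivAt.congr_of_eventuallyEq ?_
    filter_upwards [Ioi_mem_nhds hgt] with y hy
    exact indicator_of_mem hy g

theorem indicator_Ioi_eq_comp_max {g : ℝ → ℝ} {a : ℝ} (hga : g a = 0) :
    (Ioi a).indicator g = fun x => g (max x a) := by
  ext x
  rcases le_or_gt x a with hx | hx
  · rw [indicator_of_notMem (by simpa using hx), max_eq_right hx, hga]
  · rw [indicator_of_mem (show x ∈ Ioi a from hx), max_eq_left hx.le]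

theorem LipschitzOnWith.indicator_Ioi {g : ℝ → ℝ} {K : NNReal} {a T : ℝ}
    (hg : LipschitzOnWith K g (Icc a T)) (hga : g a = 0) (haT : a ≤ T) :
    LipschitzOnWith K ((Ioi a).indicator g) (Iic T) := by
  rw [indicator_Ioi_eq_comp_max hga]
  have h := hg.comp (LipschitzWith.id.max_const a).lipschitzOnWith
    (fun x (hx : x ∈ Iic T) => ⟨le_max_right x a, max_le hx haT⟩)
  rw [mul_one] at h
  exact h

theorem hasDerivAt_integral_rpow_mul_indicator_Ioi_sub {g : ℝ → ℝ} {a γ c : ℝ} (hγ : 0 < γ)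
    (hc : 0 ≤ c) (hg : ContDiff ℝ 1 g) (hga : g a = 0) (t₀ : ℝ) :
    HasDerivAt (fun t => ∫ s in 0..c, s ^ (γ - 1) * (Ioi a).indicator g (t - s))
      (∫ s in 0..c, s ^ (γ - 1) * (Ioi a).indicator (deriv g) (t₀ - s)) t₀ := by
  obtain ⟨K, hK⟩ := hg.contDiffOn.exists_lipschitzOnWith one_ne_zero
    (convex_Icc a (max a (t₀ + 1))) isCompact_Icc
  have hlip := hK.indicator_Ioi hga (le_max_left _ _)
  have hcont : Continuous ((Ioi a).indicator g) := by
    rw [indicator_Ioi_eq_comp_max hga]; fun_prop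
  have hkernel : IntervalIntegrable (fun s : ℝ => s ^ (γ - 1)) volume 0 c :=
    intervalIntegral.intervalIntegrable_rpow' (by linarith)
  have hmeas : ∀ φ : ℝ → ℝ, Measurable φ → ∀ t : ℝ, ∀ μ : Measure ℝ,
      AEStronglyMeasurable (fun s => s ^ (γ - 1) * φ (t - s)) μ := by
    intro φ hφ t μ
    exact (by fun_prop : Measurable fun s : ℝ => s ^ (γ - 1) * φ (t - s)).aestronglyMeasurable
  refine (intervalIntegral.hasDerivAt_integral_of_dominated_loc_of_lip
    (Metric.ball_mem_nhds t₀ one_pos) (.of_forall fun t => hmeas _ hcont.measurable t _)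
    (hkernel.mul_continuousOn (hcont.comp (continuous_sub_left t₀)).continuousOn)
    (hmeas _ ((measurable_deriv g).indicator measurableSet_Ioi) t₀ _) ?_ (hkernel.mul_const K)
    ?_).2
  · refine ae_of_all _ fun s hs => ?_
    rw [uIoc_of_le hc] at hs
    have hshift : MapsTo (fun t => t - s) (Metric.ball t₀ 1) (Iic (max a (t₀ + 1))) := by
      intro t ht
      have := (abs_lt.1 (Real.dist_eq t t₀ ▸ Metric.mem_ball.1 ht)).2
      show t - s ≤ max a (t₀ + 1)
      exact le_max_of_le_right (by linarith [hs.1])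
    have hsub : LipschitzWith 1 (fun t : ℝ => t - s) :=
      LipschitzWith.of_dist_le_mul fun x y => by simp [Real.dist_eq]
    have := (lipschitzWith_smul (s ^ (γ - 1))).comp_lipschitzOnWith
      (hlip.comp hsub.lipschitzOnWith hshift)
    rwa [show Real.nnabs (s ^ (γ - 1) * K) = ‖s ^ (γ - 1)‖₊ * (K * 1) by ext; simp]
  · filter_upwards [Measure.ae_ne volume (t₀ - a)] with s hs _
    have hd := hasDerivAt_indicator_Ioi (a := a) (hg.differentiable one_ne_zero (t₀ - s))
      (by intro h; exact hs (by linarith))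
    exact (hd.comp_sub_const t₀ s).const_mul _

theorem hasDerivWithinAt_fracInt {g : ℝ → ℝ} {a γ t : ℝ} (hγ : 0 < γ) (hg : ContDiff ℝ 1 g)
    (hga : g a = 0) (ht : a ≤ t) :
    HasDerivWithinAt (fracInt a γ g) (fracInt a γ (deriv g) t) (Ici a) t := by
  have hrepr : ∀ φ : ℝ → ℝ, ∀ u ∈ Icc a (t + 1), fracInt a γ φ u
      = 1 / Real.Gamma γ * ∫ s in 0..t - a + 1, s ^ (γ - 1) * (Ioi a).indicator φ (u - s) :=
    fun φ u hu => by
      rw [fracInt, intervalIntegral_rpow_mul_indicator_Ioi_sub φ hu.1 (by linarith [hu.2])]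
  have heq : fracInt a γ g =ᶠ[𝓝[Ici a] t] fun u =>
      1 / Real.Gamma γ * ∫ s in 0..t - a + 1, s ^ (γ - 1) * (Ioi a).indicator g (u - s) := by
    filter_upwards [inter_mem_nhdsWithin (Ici a) (Iio_mem_nhds (lt_add_one t))] with u hu
    exact hrepr g u ⟨hu.1, hu.2.le⟩
  rw [hrepr (deriv g) t ⟨ht, by linarith⟩]
  exact ((hasDerivAt_integral_rpow_mul_indicator_Ioi_sub hγ (by linarith) hg hga t).const_mul
    _).hasDerivWithinAt.congr_of_eventuallyEq heq (hrepr g t ⟨ht, by linarith⟩)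

theorem intervalIntegral_sub_rpow_mul_eq_rpow_mul_integral_unitInterval (h : ℝ → ℝ)
    {a t γ : ℝ} (hγ : γ ≠ 0) (hat : a ≤ t) :
    ∫ τ in a..t, (t - τ) ^ (γ - 1) * h τ
      = (t - a) ^ γ * ∫ v in 0..1, v ^ (γ - 1) * h (t - (t - a) * v) := by
  have hsub := intervalIntegral.mul_integral_comp_sub_mul
    (f := fun τ => (t - τ) ^ (γ - 1) * h τ) (a := 0) (b := 1) (t - a) t
  simp only [sub_sub_cancel, mul_one, mul_zero, sub_zero] at hsub
  have hsplit : ∫ v in 0..1, ((t - a) * v) ^ (γ - 1) * h (t - (t - a) * v)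
      = (t - a) ^ (γ - 1) * ∫ v in 0..1, v ^ (γ - 1) * h (t - (t - a) * v) := by
    rw [← intervalIntegral.integral_const_mul]
    refine intervalIntegral.integral_congr fun v hv => ?_
    rw [uIcc_of_le zero_le_one] at hv
    rw [Real.mul_rpow (by linarith) hv.1, mul_assoc]
  rw [← hsub, hsplit, ← mul_assoc, mul_comm (t - a),
    ← Real.rpow_add_one' (by linarith) (by simpa using hγ), sub_add_cancel]

theorem continuousOn_fracInt {h : ℝ → ℝ} {a b γ : ℝ} (hγ : 0 < γ)
    (hh : ContinuousOn h (Icc a b)) : ContinuousOn (fracInt a γ h) (Icc a b) := by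
  obtain ⟨M, hM⟩ := isCompact_Icc.exists_bound_of_continuousOn hh
  have hmaps : ∀ t ∈ Icc a b, MapsTo (fun v => t - (t - a) * v) (Icc 0 1) (Icc a b) :=
    fun t ht v hv => ⟨by nlinarith [ht.1, hv.2], by nlinarith [ht.2, hv.1, ht.1]⟩
  have hI :
      ContinuousOn (fun t => ∫ v in 0..1, v ^ (γ - 1) * h (t - (t - a) * v)) (Icc a b) := by
    intro t₀ ht₀
    refine intervalIntegral.continuousWithinAt_of_dominated_interval
      (bound := fun v => v ^ (γ - 1) * M) ?_ ?_
      ((intervalIntegral.intervalIntegrable_rpow' (by linarith)).mul_const M) ?_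
    · filter_upwards [self_mem_nhdsWithin] with t ht
      rw [uIoc_of_le zero_le_one]
      refine (by fun_prop : Measurable fun v : ℝ => v ^ (γ - 1)).aestronglyMeasurable.mul ?_
      exact ((hh.comp (by fun_prop) (hmaps t ht)).mono Ioc_subset_Icc_self).aestronglyMeasurable
        measurableSet_Ioc
    · filter_upwards [self_mem_nhdsWithin] with t ht
      refine ae_of_all _ fun v hv => ?_
      rw [uIoc_of_le zero_le_one] at hv
      rw [norm_mul, Real.norm_of_nonneg (Real.rpow_nonneg hv.1.le _)]
      exact mul_le_mul_of_nonneg_left (hM _ (hmaps t ht (Ioc_subset_Icc_self hv)))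
        (Real.rpow_nonneg hv.1.le _)
    · refine ae_of_all _ fun v hv => ?_
      rw [uIoc_of_le zero_le_one] at hv
      refine continuousWithinAt_const.mul ((hh.comp (by fun_prop) fun t ht => ?_) t₀ ht₀)
      exact hmaps t ht (Ioc_subset_Icc_self hv)
  have hpow : Continuous fun t => (t - a) ^ γ :=
    (continuous_sub_right a).rpow_const fun _ => Or.inr hγ.le
  refine ((continuousOn_const (c := 1 / Real.Gamma γ)).mul (hpow.continuousOn.mul hI)).congr
    fun t ht => ?_
  rw [fracInt, intervalIntegral_sub_rpow_mul_eq_rpow_mul_integral_unitInterval h hγ.ne' ht.1]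
  rfl

section DerivativeChain

variable {𝕜 F : Type*} [NontriviallyNormedField 𝕜] [NormedAddCommGroup F] [NormedSpace 𝕜 F]
  {s : Set 𝕜} {D : ℕ → 𝕜 → F} {n : ℕ}

theorem iteratedDerivWithin_eqOn_of_hasDerivWithinAt (hs : UniqueDiffOn 𝕜 s)
    (hD : ∀ k < n, ∀ t ∈ s, HasDerivWithinAt (D k) (D (k + 1) t) s t) {k : ℕ} (hk : k ≤ n) :
    EqOn (iteratedDerivWithin k (D 0) s) (D k) s := by
  induction k with
  | zero => intro t _; simp
  | succ k ih =>
    intro t ht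
    rw [iteratedDerivWithin_succ, derivWithin_congr (ih (by omega)) (ih (by omega) ht)]
    exact (hD k (by omega) t ht).derivWithin (hs t ht)

theorem contDiffOn_of_hasDerivWithinAt (hs : UniqueDiffOn 𝕜 s)
    (hD : ∀ k < n, ∀ t ∈ s, HasDerivWithinAt (D k) (D (k + 1) t) s t)
    (hcont : ContinuousOn (D n) s) : ContDiffOn 𝕜 n (D 0) s := by
  have hdiff : ∀ k < n, DifferentiableOn 𝕜 (D k) s :=
    fun k hk t ht => (hD k hk t ht).differentiableWithinAt
  refine contDiffOn_of_continuousOn_differentiableOn_deriv (fun m hm => ?_) (fun m hm => ?_)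
  · have hm : m ≤ n := by exact_mod_cast hm
    refine ContinuousOn.congr ?_ (iteratedDerivWithin_eqOn_of_hasDerivWithinAt hs hD hm)
    rcases hm.lt_or_eq with hlt | rfl
    · exact (hdiff m hlt).continuousOn
    · exact hcont
  · have hm : m < n := by exact_mod_cast hm
    exact (hdiff m hm).congr (iteratedDerivWithin_eqOn_of_hasDerivWithinAt hs hD hm.le)

end DerivativeChain

theorem caputo_deriv_regularity_general (a b α : ℝ) (p : ℕ) (hab : a < b)
    (hα1 : α < 1) (f : ℝ → ℝ)
    (hf : ContDiff ℝ (p + 1) f)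
    (hf0 : ∀ k ≤ p, iteratedDeriv k f a = 0) :
    ContDiffOn ℝ p (caputoDeriv a α f) (Set.Icc a b) ∧
    (∀ k ≤ p - 1, iteratedDerivWithin k (caputoDeriv a α f) (Set.Icc a b) a = 0) ∧
    (∀ k, 1 ≤ k → k ≤ p → ∀ t ∈ Set.Icc a b,
      iteratedDerivWithin k (caputoDeriv a α f) (Set.Icc a b) t
        = fracInt a (1 - α) (iteratedDeriv (k + 1) f) t) := by
  have hγ : 0 < 1 - α := by linarith
  set D : ℕ → ℝ → ℝ := fun k => fracInt a (1 - α) (iteratedDeriv (k + 1) f)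
  have hD0 : caputoDeriv a α f = D 0 := by simp [D, caputoDeriv, iteratedDeriv_one]
  have hs := uniqueDiffOn_Icc hab
  have hD : ∀ k < p, ∀ t ∈ Icc a b, HasDerivWithinAt (D k) (D (k + 1) t) (Icc a b) t := by
    intro k hk t ht
    have hC1 : ContDiff ℝ 1 (iteratedDeriv (k + 1) f) :=
      (contDiff_nat_succ_iff_contDiff_one_iteratedDeriv.1
        (hf.of_le (by exact_mod_cast (show k + 1 + 1 ≤ p + 1 by omega)))).2
    have := (hasDerivWithinAt_fracInt hγ hC1 (hf0 (k + 1) hk) ht.1).mono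
      (Icc_subset_Ici_self : Icc a b ⊆ Ici a)
    rwa [← iteratedDeriv_succ] at this
  have hcont : ContinuousOn (D p) (Icc a b) :=
    continuousOn_fracInt hγ (hf.continuous_iteratedDeriv (p + 1) le_rfl).continuousOn
  refine ⟨hD0 ▸ contDiffOn_of_hasDerivWithinAt hs hD hcont, fun k hk => ?_,
    fun k _ hk t ht => ?_⟩
  · rw [hD0, iteratedDerivWithin_eqOn_of_hasDerivWithinAt hs hD (by omega)
      (left_mem_Icc.2 hab.le)]
    simp [D, fracInt]
  · rw [hD0, iteratedDerivWithin_eqOn_of_hasDerivWithinAt hs hD hk ht]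

/-- for `f ∈ C^{p+1}₊([a,b])` and `0 < α < 1`, `ᶜD₊^α f ∈ C^p₊([a,b])`
and `(d^k/dt^k)(ᶜD₊^α f) = I₊^{1-α} f^{(k+1)}` for `1 ≤ k ≤ p`. -/
theorem caputo_deriv_regularity (a b α : ℝ) (p : ℕ) (hab : a < b)
    (hα0 : 0 < α) (hα1 : α < 1) (f : ℝ → ℝ)
    (hf : ContDiff ℝ (p + 1) f)
    (hf0 : ∀ k ≤ p, iteratedDeriv k f a = 0) :
    ContDiffOn ℝ p (caputoDeriv a α f) (Set.Icc a b) ∧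
    (∀ k ≤ p - 1, iteratedDerivWithin k (caputoDeriv a α f) (Set.Icc a b) a = 0) ∧
    (∀ k, 1 ≤ k → k ≤ p → ∀ t ∈ Set.Icc a b,
      iteratedDerivWithin k (caputoDeriv a α f) (Set.Icc a b) t
        = fracInt a (1 - α) (iteratedDeriv (k + 1) f) t) :=
  caputo_deriv_regularity_general a b α p hab hα1 f hf hf0
end

section
/- Multidimensional half-derivative composition (div-grad lemma): let Ω ⊂ ℝ^d be bounded and convex, γ ∈ ℝ^d a constant vector, and u : cl(Ω) → ℝ such that along every line parallel to a coordinate axis the restriction of u is AC². Then for every x ∈ Ω, div^{1/2}(γ × ᶜ∇^{1/2} u)(x) = γ · ∇u(x), where × is the componentwise product. -/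
open MeasureTheory intervalIntegral Set

/-!
Along a coordinate line through `x ∈ Ω` the identity is one-dimensional. Write
`I^{1/2} = fracInt a (1/2)` on the segment `[a, b]`. The Caputo half-derivative of `f` is
`I^{1/2} f'`, so the Riemann–Liouville half-derivative of it is the derivative of
`I^{1/2} I^{1/2} f'`. Exchanging the order of integration (Dirichlet's formula) and Abel's integral
`∫ₛᵗ (t - τ)^{-1/2} (τ - s)^{-1/2} dτ = π = Γ(1/2)²`, whose antiderivative is
`arcsin ((2τ - s - t) / (t - s))`, give `I^{1/2} I^{1/2} f' = ∫ₐ f'`. Its derivative at the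
interior point `x i` of the segment is `f' (x i)`; openness of `Ω` puts `x i` in the interior.
-/
open Real Function

noncomputable def abelKernel (s t τ : ℝ) : ℝ := (t - τ) ^ (-(1/2) : ℝ) * (τ - s) ^ (-(1/2) : ℝ)

section AbelKernel

variable {s t τ : ℝ}

lemma abelKernel_nonneg (hτ : τ ∈ Icc s t) : 0 ≤ abelKernel s t τ :=
  mul_nonneg (rpow_nonneg (sub_nonneg.2 hτ.2) _) (rpow_nonneg (sub_nonneg.2 hτ.1) _)

lemma hasDerivAt_arcsin_abelKernel (hτ : τ ∈ Ioo s t) :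
    HasDerivAt (fun τ => arcsin ((2 * τ - s - t) / (t - s))) (abelKernel s t τ) τ := by
  obtain ⟨hsτ, hτt⟩ := hτ
  have hst : 0 < t - s := by linarith
  have hz : (2 * τ - s - t) / (t - s) ∈ Ioo (-1) 1 := by
    constructor
    · rw [lt_div_iff₀ hst]; linarith
    · rw [div_lt_iff₀ hst]; linarith
  have haffine : HasDerivAt (fun τ => (2 * τ - s - t) / (t - s)) (2 / (t - s)) τ := by
    simpa using ((((hasDerivAt_id τ).const_mul 2).sub_const s).sub_const t).div_const (t - s)
  have hsqrt : √(1 - ((2 * τ - s - t) / (t - s)) ^ 2) = 2 * √(t - τ) * √(τ - s) / (t - s) := by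
    rw [div_pow, one_sub_div (by positivity), sqrt_div' _ (sq_nonneg _), sqrt_sq hst.le,
      show (t - s) ^ 2 - (2 * τ - s - t) ^ 2 = 2 ^ 2 * ((t - τ) * (τ - s)) by ring,
      sqrt_mul' _ (by nlinarith), sqrt_sq zero_le_two, sqrt_mul (by linarith)]
    ring
  have h1 : 0 < √(t - τ) := sqrt_pos.2 (by linarith)
  have h2 : 0 < √(τ - s) := sqrt_pos.2 (by linarith)
  have hval : abelKernel s t τ = 1 / √(1 - ((2 * τ - s - t) / (t - s)) ^ 2) * (2 / (t - s)) := by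
    rw [abelKernel, hsqrt, rpow_neg (by linarith), rpow_neg (by linarith), ← sqrt_eq_rpow,
      ← sqrt_eq_rpow]
    field_simp
  rw [hval]
  exact (hasDerivAt_arcsin hz.1.ne' hz.2.ne).comp τ haffine

lemma integrableOn_abelKernel : IntegrableOn (abelKernel s t) (Ioc s t) :=
  intervalIntegral.integrableOn_deriv_of_nonneg (by fun_prop)
    (fun _ => hasDerivAt_arcsin_abelKernel) (fun _ hτ => abelKernel_nonneg (Ioo_subset_Icc_self hτ))

lemma setIntegral_abelKernel (hst : s < t) : ∫ τ in Ioo s t, abelKernel s t τ = π := by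
  rw [← integral_Ioc_eq_integral_Ioo, ← intervalIntegral.integral_of_le hst.le,
    intervalIntegral.integral_eq_sub_of_hasDerivAt_of_le hst.le (by fun_prop)
      (fun _ => hasDerivAt_arcsin_abelKernel)
      ((intervalIntegrable_iff_integrableOn_Ioc_of_le hst.le).2 integrableOn_abelKernel)]
  have hst' : t - s ≠ 0 := by linarith
  rw [show (2 * t - s - t) / (t - s) = 1 by field_simp; ring,
    show (2 * s - s - t) / (t - s) = -1 by field_simp; ring, arcsin_one, arcsin_neg_one]
  ring

end AbelKernel

section Dirichlet

variable {a t : ℝ}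

lemma setIntegral_Ioo_indicator_Ioi {φ : ℝ → ℝ} {s : ℝ} (has : a ≤ s) :
    ∫ τ in Ioo a t, (Ioi s).indicator φ τ = ∫ τ in Ioo s t, φ τ := by
  rw [setIntegral_indicator measurableSet_Ioi, Ioo_inter_Ioi, max_eq_right has]

lemma setIntegral_Ioo_indicator_Iio {φ : ℝ → ℝ} {τ : ℝ} (hτt : τ ≤ t) :
    ∫ s in Ioo a t, (Iio τ).indicator φ s = ∫ s in Ioo a τ, φ s := by
  rw [setIntegral_indicator measurableSet_Iio, Ioo_inter_Iio, min_eq_right hτt]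

/-- Dirichlet's formula: Fubini on the triangle `a < s < τ < t`, encoded on the square
`(a, t)²` by the indicator of `s < τ`. -/
theorem integral_Ioo_integral_Ioo_swap {F : ℝ → ℝ → ℝ}
    (hF : Integrable (uncurry fun s τ => (Ioi s).indicator (F s) τ)
      ((volume.restrict (Ioo a t)).prod (volume.restrict (Ioo a t)))) :
    ∫ τ in Ioo a t, ∫ s in Ioo a τ, F s τ = ∫ s in Ioo a t, ∫ τ in Ioo s t, F s τ := by
  have hindicator : ∀ s τ, (Ioi s).indicator (F s) τ = (Iio τ).indicator (F · τ) s := by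
    intro s τ
    simp only [indicator, mem_Ioi, mem_Iio]
  calc ∫ τ in Ioo a t, ∫ s in Ioo a τ, F s τ
      = ∫ τ in Ioo a t, ∫ s in Ioo a t, (Ioi s).indicator (F s) τ := by
        refine setIntegral_congr_fun measurableSet_Ioo fun τ hτ => ?_
        simp only [hindicator]
        exact (setIntegral_Ioo_indicator_Iio hτ.2.le).symm
    _ = ∫ s in Ioo a t, ∫ τ in Ioo a t, (Ioi s).indicator (F s) τ :=
        (integral_integral_swap hF).symm
    _ = ∫ s in Ioo a t, ∫ τ in Ioo s t, F s τ :=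
        setIntegral_congr_fun measurableSet_Ioo fun s hs => setIntegral_Ioo_indicator_Ioi hs.1.le

end Dirichlet

section HalfIntegral

variable {a t : ℝ} {g : ℝ → ℝ}

lemma integrable_indicator_abelKernel_mul (hg : Continuous g) :
    Integrable (uncurry fun s τ => (Ioi s).indicator (fun τ => abelKernel s t τ * g s) τ)
      ((volume.restrict (Ioo a t)).prod (volume.restrict (Ioo a t))) := by
  have hmeas : Measurable
      (uncurry fun s τ => (Ioi s).indicator (fun τ => abelKernel s t τ * g s) τ) := by
    have hprod : (uncurry fun s τ => (Ioi s).indicator (fun τ => abelKernel s t τ * g s) τ) =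
        {p : ℝ × ℝ | p.1 < p.2}.indicator fun p => abelKernel p.1 t p.2 * g p.1 :=
      rfl
    rw [hprod]
    refine Measurable.indicator ?_ (measurableSet_lt measurable_fst measurable_snd)
    unfold abelKernel
    fun_prop
  have hnorm : ∀ s ∈ Ioo a t,
      ∫ τ in Ioo a t, ‖(Ioi s).indicator (fun τ => abelKernel s t τ * g s) τ‖ = π * |g s| := by
    intro s hs
    simp only [norm_indicator_eq_indicator_norm]
    rw [setIntegral_Ioo_indicator_Ioi hs.1.le,
      setIntegral_congr_fun measurableSet_Ioo fun τ hτ => by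
        rw [Real.norm_eq_abs, abs_mul, abs_of_nonneg (abelKernel_nonneg (Ioo_subset_Icc_self hτ))],
      MeasureTheory.integral_mul_const, setIntegral_abelKernel hs.2]
  refine (integrable_prod_iff hmeas.aestronglyMeasurable).2 ⟨?_, ?_⟩
  · rw [ae_restrict_iff' measurableSet_Ioo]
    refine .of_forall fun s hs => ?_
    show Integrable ((Ioi s).indicator _) _
    rw [integrable_indicator_iff measurableSet_Ioi, IntegrableOn,
      Measure.restrict_restrict measurableSet_Ioi, inter_comm, Ioo_inter_Ioi, max_eq_right hs.1.le]
    exact (integrableOn_abelKernel.mono_set Ioo_subset_Ioc_self).mul_const (g s)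
  · refine Integrable.congr ((hg.abs.const_mul π).integrableOn_Icc.mono_set Ioo_subset_Icc_self) ?_
    rw [Filter.EventuallyEq, ae_restrict_iff' measurableSet_Ioo]
    exact .of_forall fun s hs => (hnorm s hs).symm

lemma integral_rpow_mul_integral_rpow_mul (hg : Continuous g) (hat : a ≤ t) :
    ∫ τ in a..t, (t - τ) ^ (-(1/2) : ℝ) * ∫ s in a..τ, (τ - s) ^ (-(1/2) : ℝ) * g s =
      π * ∫ s in a..t, g s := by
  rw [intervalIntegral.integral_of_le hat, intervalIntegral.integral_of_le hat,
    integral_Ioc_eq_integral_Ioo, integral_Ioc_eq_integral_Ioo]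
  calc ∫ τ in Ioo a t, (t - τ) ^ (-(1/2) : ℝ) * ∫ s in a..τ, (τ - s) ^ (-(1/2) : ℝ) * g s
      = ∫ τ in Ioo a t, ∫ s in Ioo a τ, abelKernel s t τ * g s := by
        refine setIntegral_congr_fun measurableSet_Ioo fun τ hτ => ?_
        rw [intervalIntegral.integral_of_le hτ.1.le, integral_Ioc_eq_integral_Ioo,
          ← MeasureTheory.integral_const_mul]
        simp only [abelKernel, mul_assoc]
    _ = ∫ s in Ioo a t, ∫ τ in Ioo s t, abelKernel s t τ * g s :=
        integral_Ioo_integral_Ioo_swap (integrable_indicator_abelKernel_mul hg)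
    _ = ∫ s in Ioo a t, π * g s :=
        setIntegral_congr_fun measurableSet_Ioo fun s hs => by
          rw [MeasureTheory.integral_mul_const, setIntegral_abelKernel hs.2]
    _ = π * ∫ s in Ioo a t, g s := MeasureTheory.integral_const_mul _ _

lemma fracInt_half_fracInt_half (hg : Continuous g) (hat : a ≤ t) :
    fracInt a (1/2) (fracInt a (1/2) g) t = ∫ s in a..t, g s := by
  have hexp : (1/2 : ℝ) - 1 = -(1/2) := by norm_num
  simp only [fracInt, Gamma_one_half_eq, hexp, mul_left_comm _ (1 / √π),
    intervalIntegral.integral_const_mul]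
  rw [integral_rpow_mul_integral_rpow_mul hg hat, ← mul_assoc, one_div_mul_one_div,
    mul_self_sqrt pi_pos.le, ← mul_assoc, one_div_mul_cancel pi_pos.ne', one_mul]

end HalfIntegral

lemma ContinuousOn.exists_continuous_eqOn_Icc {α β : Type*} [LinearOrder α] [TopologicalSpace α]
    [OrderTopology α] [TopologicalSpace β] {a b : α} {g : α → β} (hg : ContinuousOn g (Icc a b))
    (hab : a ≤ b) : ∃ G : α → β, Continuous G ∧ EqOn G g (Icc a b) :=
  ⟨fun t => g (projIcc a b hab t),
    hg.comp_continuous (continuous_subtype_val.comp continuous_projIcc)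
      fun t => (projIcc a b hab t).2,
    fun t ht => by simp only [projIcc_of_mem hab ht]⟩

section FractionalDerivatives

variable {a b β x : ℝ} {f g : ℝ → ℝ}

lemma fracInt_congr (h : EqOn f g (uIcc a x)) : fracInt a β f x = fracInt a β g x := by
  unfold fracInt
  congr 1
  exact intervalIntegral.integral_congr fun τ hτ => by simp only [h hτ]

lemma fracInt_const_mul (c : ℝ) (f : ℝ → ℝ) :
    fracInt a β (fun t => c * f t) = fun t => c * fracInt a β f t := by
  funext t
  simp only [fracInt, mul_left_comm _ c, intervalIntegral.integral_const_mul]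

lemma rlDeriv_const_mul (α c : ℝ) (f : ℝ → ℝ) (x : ℝ) :
    rlDeriv a α (fun t => c * f t) x = c * rlDeriv a α f x := by
  simp only [rlDeriv, fracInt_const_mul, deriv_const_mul_field']

theorem rlDeriv_half_caputoDeriv_half (hf : ∀ t ∈ Icc a b, HasDerivAt f (g t) t)
    (hg : ContinuousOn g (Icc a b)) (hx : x ∈ Ioo a b) :
    rlDeriv a (1/2) (caputoDeriv a (1/2) f) x = deriv f x := by
  have hab : a ≤ b := hx.1.le.trans hx.2.le
  obtain ⟨G, hG, hGg⟩ := hg.exists_continuous_eqOn_Icc hab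
  have hderiv : EqOn (deriv f) G (Icc a b) := fun t ht => by rw [(hf t ht).deriv, hGg ht]
  have hhalf : (1 : ℝ) - 1/2 = 1/2 := by norm_num
  have hcaputo : EqOn (caputoDeriv a (1/2) f) (fracInt a (1/2) G) (Icc a b) := fun t ht => by
    rw [caputoDeriv, hhalf]
    exact fracInt_congr (hderiv.mono (uIcc_subset_Icc (left_mem_Icc.2 hab) ht))
  have hprimitive :
      fracInt a (1/2) (caputoDeriv a (1/2) f) =ᶠ[nhds x] fun t => ∫ s in a..t, G s := by
    filter_upwards [Ioo_mem_nhds hx.1 hx.2] with t ht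
    have hsub : uIcc a t ⊆ Icc a b := uIcc_subset_Icc (left_mem_Icc.2 hab) (Ioo_subset_Icc_self ht)
    rw [fracInt_congr (hcaputo.mono hsub), fracInt_half_fracInt_half hG ht.1.le]
  rw [rlDeriv, hhalf, hprimitive.deriv_eq, hG.deriv_integral, hderiv (Ioo_subset_Icc_self hx)]

lemma continuousOn_Icc_of_eq_add_integral {h : ℝ → ℝ} (hh : IntervalIntegrable h volume a b)
    (hg : ∀ t ∈ Icc a b, g t = g a + ∫ s in a..t, h s) : ContinuousOn g (Icc a b) :=
  ((continuousOn_const.add (intervalIntegral.continuousOn_primitive_interval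
    ((intervalIntegrable_iff').1 hh))).mono Icc_subset_uIcc).congr hg

end FractionalDerivatives

lemma apply_mem_Ioo_of_isOpen {ι : Type*} [DecidableEq ι] {Ω : Set (ι → ℝ)} (hΩ : IsOpen Ω)
    {x : ι → ℝ} (hx : x ∈ Ω) {i : ι} {a b : ℝ}
    (h : {t | update x i t ∈ closure Ω} = Icc a b) : x i ∈ Ioo a b := by
  rw [← interior_Icc, ← h]
  have hopen : IsOpen {t | update x i t ∈ Ω} :=
    hΩ.preimage (continuous_const.update i continuous_id)
  have hsub : {t | update x i t ∈ Ω} ⊆ {t | update x i t ∈ closure Ω} :=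
    fun _ ht => subset_closure ht
  exact interior_maximal hsub hopen (show update x i (x i) ∈ Ω by rwa [update_eq_self])

theorem div_half_grad_half_general (d : ℕ) (Ω : Set (Fin d → ℝ))
    (hΩo : IsOpen Ω)
    (γ : Fin d → ℝ) (A B : Fin d → (Fin d → ℝ) → ℝ)
    (hAB : ∀ i, ∀ x ∈ closure Ω,
      {t : ℝ | Function.update x i t ∈ closure Ω} = Set.Icc (A i x) (B i x))
    (u : (Fin d → ℝ) → ℝ) (u' u'' : Fin d → (Fin d → ℝ) → ℝ → ℝ)
    (hu1 : ∀ i, ∀ x ∈ closure Ω, ∀ t ∈ Set.Icc (A i x) (B i x),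
      HasDerivAt (fun s => u (Function.update x i s)) (u' i x t) t)
    (hu2 : ∀ i, ∀ x ∈ closure Ω,
      IntervalIntegrable (u'' i x) volume (A i x) (B i x) ∧
      ∀ t ∈ Set.Icc (A i x) (B i x),
        u' i x t = u' i x (A i x) + ∫ s in (A i x)..t, u'' i x s) :
    ∀ x ∈ Ω,
      (∑ i, rlDeriv (A i x) (1/2)
          (fun t => γ i * caputoDeriv (A i x) (1/2)
            (fun s => u (Function.update x i s)) t) (x i))
        = ∑ i, γ i * deriv (fun s => u (Function.update x i s)) (x i) := by
  intro x hx
  refine Finset.sum_congr rfl fun i _ => ?_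
  have hxc : x ∈ closure Ω := subset_closure hx
  obtain ⟨hu''_int, hu'_eq⟩ := hu2 i x hxc
  rw [rlDeriv_const_mul, rlDeriv_half_caputoDeriv_half (hu1 i x hxc)
    (continuousOn_Icc_of_eq_add_integral hu''_int hu'_eq)
    (apply_mem_Ioo_of_isOpen hΩo hx (hAB i x hxc))]

/-- div-grad lemma. For `Ω ⊂ ℝ^d` bounded convex, a constant
vector `γ` and `u` which is `AC²` along every coordinate line of `Ω`
(with segment `Ω_{i,x} = [A i x, B i x]`), for every `x ∈ Ω`:
`div^{1/2}(γ × ᶜ∇^{1/2} u)(x) = γ · ∇u(x)`. -/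
theorem div_half_grad_half (d : ℕ) (Ω : Set (Fin d → ℝ))
    (hΩo : IsOpen Ω) (hΩb : Bornology.IsBounded Ω) (hΩc : Convex ℝ Ω)
    (γ : Fin d → ℝ) (A B : Fin d → (Fin d → ℝ) → ℝ)
    (hAB : ∀ i, ∀ x ∈ closure Ω,
      {t : ℝ | Function.update x i t ∈ closure Ω} = Set.Icc (A i x) (B i x))
    (u : (Fin d → ℝ) → ℝ) (u' u'' : Fin d → (Fin d → ℝ) → ℝ → ℝ)
    (hu1 : ∀ i, ∀ x ∈ closure Ω, ∀ t ∈ Set.Icc (A i x) (B i x),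
      HasDerivAt (fun s => u (Function.update x i s)) (u' i x t) t)
    (hu2 : ∀ i, ∀ x ∈ closure Ω,
      IntervalIntegrable (u'' i x) volume (A i x) (B i x) ∧
      ∀ t ∈ Set.Icc (A i x) (B i x),
        u' i x t = u' i x (A i x) + ∫ s in (A i x)..t, u'' i x s) :
    ∀ x ∈ Ω,
      (∑ i, rlDeriv (A i x) (1/2)
          (fun t => γ i * caputoDeriv (A i x) (1/2)
            (fun s => u (Function.update x i s)) t) (x i))
        = ∑ i, γ i * deriv (fun s => u (Function.update x i s)) (x i) :=
  div_half_grad_half_general d Ω hΩo γ A B hAB u u' u'' hu1 hu2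
end

section
/- Fractional Green-Riemann formula in 1D: for 0 < α < 1, u ∈ AC¹([a,b]) and v ∈ C¹([a,b]) with v(a) = v(b) = 0, ∫_a^b u(x) · ᶜD₋^α v(x) dx = ∫_a^b D₊^α u(x) · v(x) dx. -/
/-!
With `β = 1 - α` and `F = fracInt a β u`, Fubini on the triangle `a ≤ x ≤ y ≤ b` gives the
fractional integration by parts `∫ u · I_b^β w = ∫ I_a^β u · w` for integrable `u` and bounded
`w`; hence the left-hand side is `-∫ F v'`. Writing `u = u a + ∫ u'`, the same swap shows
`F t = ∫_a^t (u a (x - a)^(β-1) / Γ β + I_a^β u' x) dx`, so `F` is absolutely continuous and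
vanishes at `a`. Integrating `-∫ F v'` by parts, using `v b = 0`, gives `∫ F' v`.
-/

open MeasureTheory intervalIntegral Set

open Function

theorem integral_rpow_sub {r : ℝ} (hr : -1 < r) (s t : ℝ) :
    ∫ x in s..t, (x - s) ^ r = (t - s) ^ (r + 1) / (r + 1) := by
  rw [intervalIntegral.integral_comp_sub_right (fun y => y ^ r), sub_self,
    integral_rpow (Or.inl hr), Real.zero_rpow (by linarith), sub_zero]

theorem integral_sub_rpow {r : ℝ} (hr : -1 < r) (s t : ℝ) :
    ∫ x in s..t, (t - x) ^ r = (t - s) ^ (r + 1) / (r + 1) := by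
  rw [intervalIntegral.integral_comp_sub_left (fun y => y ^ r), sub_self,
    integral_rpow (Or.inl hr), Real.zero_rpow (by linarith), sub_zero]

theorem intervalIntegrable_rpow_sub {r : ℝ} (hr : -1 < r) (s a b : ℝ) :
    IntervalIntegrable (fun x => (x - s) ^ r) volume a b := by
  simpa using
    (intervalIntegral.intervalIntegrable_rpow' (a := a - s) (b := b - s) hr).comp_sub_right s

theorem intervalIntegrable_sub_rpow {r : ℝ} (hr : -1 < r) (t a b : ℝ) :
    IntervalIntegrable (fun x => (t - x) ^ r) volume a b := by
  simpa using
    (intervalIntegral.intervalIntegrable_rpow' (a := t - a) (b := t - b) hr).comp_sub_left t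

def triangle (a b : ℝ) : Set (ℝ × ℝ) := {p | a ≤ p.1 ∧ p.1 ≤ p.2 ∧ p.2 ≤ b}

section Triangle

variable {a b : ℝ}

theorem measurableSet_triangle (a b : ℝ) : MeasurableSet (triangle a b) :=
  (measurableSet_le measurable_const measurable_fst).inter
    ((measurableSet_le measurable_fst measurable_snd).inter
      (measurableSet_le measurable_snd measurable_const))

theorem triangle_subset_Icc_prod_Icc : triangle a b ⊆ Icc a b ×ˢ Icc a b :=
  fun _ ⟨h₁, h₂, h₃⟩ => ⟨⟨h₁, h₂.trans h₃⟩, h₁.trans h₂, h₃⟩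

theorem integral_indicator_triangle_fst (f : ℝ → ℝ → ℝ) (x : ℝ) :
    ∫ y, (triangle a b).indicator (uncurry f) (x, y) =
      (Icc a b).indicator (fun x => ∫ y in x..b, f x y) x := by
  by_cases hx : x ∈ Icc a b
  · have hslice : (fun y => (triangle a b).indicator (uncurry f) (x, y)) =
        (Icc x b).indicator (f x) := by
      ext y
      simp [indicator_apply, triangle, hx.1]
    rw [hslice, MeasureTheory.integral_indicator measurableSet_Icc, indicator_of_mem hx,
      integral_Icc_eq_integral_Ioc, ← intervalIntegral.integral_of_le hx.2]
  · have hslice : ∀ y, (x, y) ∉ triangle a b :=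
      fun y ⟨h₁, h₂, h₃⟩ => hx ⟨h₁, h₂.trans h₃⟩
    simp [indicator_of_notMem (hslice _), indicator_of_notMem hx]

theorem integral_indicator_triangle_snd (f : ℝ → ℝ → ℝ) (y : ℝ) :
    ∫ x, (triangle a b).indicator (uncurry f) (x, y) =
      (Icc a b).indicator (fun y => ∫ x in a..y, f x y) y := by
  by_cases hy : y ∈ Icc a b
  · have hslice : (fun x => (triangle a b).indicator (uncurry f) (x, y)) =
        (Icc a y).indicator (f · y) := by
      ext x
      simp [indicator_apply, triangle, hy.2, and_comm]
    rw [hslice, MeasureTheory.integral_indicator measurableSet_Icc, indicator_of_mem hy,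
      integral_Icc_eq_integral_Ioc, ← intervalIntegral.integral_of_le hy.1]
  · have hslice : ∀ x, (x, y) ∉ triangle a b :=
      fun x ⟨h₁, h₂, h₃⟩ => hy ⟨h₁.trans h₂, h₃⟩
    simp [indicator_of_notMem (hslice _), indicator_of_notMem hy]

theorem integral_integral_swap_triangle (hab : a ≤ b) {f : ℝ → ℝ → ℝ}
    (hf : IntegrableOn (uncurry f) (triangle a b)) :
    ∫ x in a..b, ∫ y in x..b, f x y = ∫ y in a..b, ∫ x in a..y, f x y := by
  have hF : Integrable (uncurry fun x y => (triangle a b).indicator (uncurry f) (x, y))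
      (volume.prod volume) := by
    rw [← Measure.volume_eq_prod]
    exact (integrable_indicator_iff (measurableSet_triangle a b)).2 hf
  simpa only [integral_indicator_triangle_fst, integral_indicator_triangle_snd,
    MeasureTheory.integral_indicator measurableSet_Icc, integral_Icc_eq_integral_Ioc,
    ← intervalIntegral.integral_of_le hab] using integral_integral_swap hF

theorem integrableOn_triangle_mul_rpow_sub_mul (hab : a ≤ b) {r C : ℝ} (hr : -1 < r)
    {u w : ℝ → ℝ} (hu : IntegrableOn u (Icc a b))
    (hw : AEStronglyMeasurable w (volume.restrict (Icc a b)))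
    (hwC : ∀ y ∈ Icc a b, ‖w y‖ ≤ C) :
    IntegrableOn (uncurry fun x y => u x * ((y - x) ^ r * w y)) (triangle a b) := by
  -- Extended by zero, `u x * (y - x) ^ r` is a convolution integrand of two integrable functions.
  have hk : Integrable ((Icc 0 (b - a)).indicator fun t : ℝ => t ^ r) := by
    rw [integrable_indicator_iff measurableSet_Icc, integrableOn_Icc_iff_integrableOn_Ioc,
      ← intervalIntegrable_iff_integrableOn_Ioc_of_le (sub_nonneg.2 hab)]
    exact intervalIntegral.intervalIntegrable_rpow' hr
  have hconv := (((integrable_indicator_iff measurableSet_Icc).2 hu).convolution_integrand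
    (ContinuousLinearMap.mul ℝ ℝ) hk).swap
  have hkernel : IntegrableOn (fun p : ℝ × ℝ => u p.1 * (p.2 - p.1) ^ r) (triangle a b) := by
    rw [Measure.volume_eq_prod]
    refine hconv.integrableOn.congr_fun (fun p hp => ?_) (measurableSet_triangle a b)
    have := triangle_subset_Icc_prod_Icc hp
    simp [indicator_of_mem this.1, indicator_of_mem (show p.2 - p.1 ∈ Icc 0 (b - a) from
      ⟨sub_nonneg.2 hp.2.1, by linarith [hp.1, hp.2.2]⟩)]
  have hwm :
      AEStronglyMeasurable (fun p : ℝ × ℝ => w p.2) (volume.restrict (triangle a b)) := by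
    have := hw.comp_snd (μ := (volume : Measure ℝ).restrict univ)
    rw [Measure.prod_restrict, ← Measure.volume_eq_prod] at this
    exact this.mono_set fun p hp => mk_mem_prod (mem_univ p.1) (triangle_subset_Icc_prod_Icc hp).2
  have := hkernel.mul_bdd hwm
    (ae_restrict_of_forall_mem (measurableSet_triangle a b) fun p hp =>
      hwC p.2 (triangle_subset_Icc_prod_Icc hp).2)
  simpa only [IntegrableOn, uncurry_def, mul_assoc] using this

end Triangle

section FractionalIntegral

variable {a b β : ℝ}

theorem intervalIntegrable_fracInt (hab : a ≤ b) (hβ : 0 < β) {f : ℝ → ℝ}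
    (hf : IntegrableOn f (Icc a b)) : IntervalIntegrable (fracInt a β f) volume a b := by
  have hT := integrableOn_triangle_mul_rpow_sub_mul hab (by linarith : -1 < β - 1) hf
    aestronglyMeasurable_const (fun _ _ => (norm_one (α := ℝ)).le)
  have hF := (integrable_indicator_iff (measurableSet_triangle a b)).2 hT
  rw [Measure.volume_eq_prod] at hF
  have hmarg := hF.integral_prod_right
  simp only [integral_indicator_triangle_snd, integrable_indicator_iff measurableSet_Icc] at hmarg
  refine ((intervalIntegrable_iff_integrableOn_Icc_of_le hab).2 hmarg).const_mul
    (1 / Real.Gamma β) |>.congr fun y _ => ?_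
  simp only [fracInt, mul_one, mul_comm (f _)]

theorem integral_mul_fracIntR (hab : a ≤ b) (hβ : 0 < β) {C : ℝ} {u w : ℝ → ℝ}
    (hu : IntegrableOn u (Icc a b)) (hw : AEStronglyMeasurable w (volume.restrict (Icc a b)))
    (hwC : ∀ y ∈ Icc a b, ‖w y‖ ≤ C) :
    ∫ x in a..b, u x * fracIntR b β w x = ∫ y in a..b, fracInt a β u y * w y := by
  have hswap := integral_integral_swap_triangle hab
    (integrableOn_triangle_mul_rpow_sub_mul hab (by linarith : -1 < β - 1) hu hw hwC)
  have hL (x : ℝ) : u x * fracIntR b β w x =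
      1 / Real.Gamma β * ∫ y in x..b, u x * ((y - x) ^ (β - 1) * w y) := by
    rw [fracIntR, intervalIntegral.integral_const_mul]
    ring
  have hR (y : ℝ) : fracInt a β u y * w y =
      1 / Real.Gamma β * ∫ x in a..y, u x * ((y - x) ^ (β - 1) * w y) := by
    rw [fracInt, mul_assoc, ← intervalIntegral.integral_mul_const]
    simp only [mul_comm (u _), mul_right_comm _ (u _)]
  simp only [hL, hR]
  rw [intervalIntegral.integral_const_mul, intervalIntegral.integral_const_mul, hswap]

theorem fracInt_intervalIntegral {t : ℝ} (hat : a ≤ t) (hβ : 0 < β) {f : ℝ → ℝ}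
    (hf : IntegrableOn f (Icc a t)) :
    fracInt a β (fun x => ∫ s in a..x, f s) t = ∫ x in a..t, fracInt a β f x := by
  have hr : -1 < β - 1 := by linarith
  have hprod : IntegrableOn (uncurry fun s x => f s * (t - x) ^ (β - 1)) (triangle a t) := by
    have := hf.mul_prod ((intervalIntegrable_iff_integrableOn_Icc_of_le hat).1
      (intervalIntegrable_sub_rpow hr t a t))
    rw [Measure.prod_restrict, ← Measure.volume_eq_prod] at this
    exact IntegrableOn.mono_set this triangle_subset_Icc_prod_Icc
  have hconst (s : ℝ) :
      fracIntR t β (fun _ => 1) s = 1 / Real.Gamma β * ((t - s) ^ β / β) := by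
    simp only [fracIntR, mul_one, integral_rpow_sub hr, sub_add_cancel]
  calc fracInt a β (fun x => ∫ s in a..x, f s) t
      = 1 / Real.Gamma β * ∫ x in a..t, ∫ s in a..x, f s * (t - x) ^ (β - 1) := by
        rw [fracInt]
        congr 1
        refine intervalIntegral.integral_congr fun x _ => ?_
        rw [mul_comm, ← intervalIntegral.integral_mul_const]
    _ = 1 / Real.Gamma β * ∫ s in a..t, ∫ x in s..t, f s * (t - x) ^ (β - 1) := by
        rw [integral_integral_swap_triangle hat hprod]
    _ = ∫ s in a..t, f s * fracIntR t β (fun _ => 1) s := by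
        rw [← intervalIntegral.integral_const_mul]
        refine intervalIntegral.integral_congr fun s _ => ?_
        simp only [hconst, intervalIntegral.integral_const_mul, integral_sub_rpow hr,
          sub_add_cancel]
        ring
    _ = ∫ x in a..t, fracInt a β f x := by
        rw [integral_mul_fracIntR hat hβ hf aestronglyMeasurable_const fun _ _ => norm_one.le]
        simp only [mul_one]

theorem fracInt_eq_integral_of_eq_add_integral (hβ : 0 < β) {u u' : ℝ → ℝ}
    (hu' : IntervalIntegrable u' volume a b)
    (hu : ∀ t ∈ Icc a b, u t = u a + ∫ s in a..t, u' s) {t : ℝ} (ht : t ∈ Icc a b) :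
    fracInt a β u t =
      ∫ x in a..t, (u a / Real.Gamma β * (x - a) ^ (β - 1) + fracInt a β u' x) := by
  have hr : -1 < β - 1 := by linarith
  have hu't : IntegrableOn u' (Icc a t) :=
    ((intervalIntegrable_iff_integrableOn_Icc_of_le (ht.1.trans ht.2)).1 hu').mono_set
      (Icc_subset_Icc_right ht.2)
  have hU : ContinuousOn (fun x => ∫ s in a..x, u' s) (uIcc a t) :=
    intervalIntegral.continuousOn_primitive_interval (by rwa [uIcc_of_le ht.1])
  have hk := intervalIntegrable_sub_rpow hr t a t
  calc fracInt a β u t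
      = 1 / Real.Gamma β * ∫ x in a..t,
          ((t - x) ^ (β - 1) * u a + (t - x) ^ (β - 1) * ∫ s in a..x, u' s) := by
        rw [fracInt]
        congr 1
        refine intervalIntegral.integral_congr fun x hx => ?_
        rw [uIcc_of_le ht.1] at hx
        simp only [hu x ⟨hx.1, hx.2.trans ht.2⟩, mul_add]
    _ = u a * (t - a) ^ β / β / Real.Gamma β +
          fracInt a β (fun x => ∫ s in a..x, u' s) t := by
        rw [intervalIntegral.integral_add (hk.mul_const _) (hk.mul_continuousOn hU),
          intervalIntegral.integral_mul_const, integral_sub_rpow hr, sub_add_cancel, fracInt]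
        ring
    _ = (∫ x in a..t, u a / Real.Gamma β * (x - a) ^ (β - 1)) +
          ∫ x in a..t, fracInt a β u' x := by
        rw [fracInt_intervalIntegral ht.1 hβ hu't, intervalIntegral.integral_const_mul,
          integral_rpow_sub hr, sub_add_cancel]
        ring
    _ = _ := (intervalIntegral.integral_add
        ((intervalIntegrable_rpow_sub hr a a t).const_mul _)
        (intervalIntegrable_fracInt ht.1 hβ hu't)).symm

end FractionalIntegral

theorem AbsolutelyContinuousOnInterval.congr {X : Type*} [PseudoMetricSpace X] {f g : ℝ → X}
    {a b : ℝ} (hf : AbsolutelyContinuousOnInterval f a b) (hfg : EqOn f g (uIcc a b)) :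
    AbsolutelyContinuousOnInterval g a b := by
  refine Filter.Tendsto.congr' ?_ hf
  filter_upwards [Filter.mem_inf_of_right (Filter.mem_principal_self _)] with E hE
  exact Finset.sum_congr rfl fun i hi => by rw [hfg (hE.1 i hi).1, hfg (hE.1 i hi).2]

section AbsolutelyContinuous

variable {a b : ℝ}

theorem absolutelyContinuousOnInterval_of_eq_add_integral (hab : a ≤ b) {f f' : ℝ → ℝ}
    (hf' : IntervalIntegrable f' volume a b)
    (hf : ∀ t ∈ Icc a b, f t = f a + ∫ s in a..t, f' s) :
    AbsolutelyContinuousOnInterval f a b := by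
  have hconst : AbsolutelyContinuousOnInterval (fun _ => f a) a b :=
    (LipschitzWith.const (f a)).lipschitzOnWith.absolutelyContinuousOnInterval
  refine (hconst.add (hf'.absolutelyContinuousOnInterval_intervalIntegral left_mem_uIcc)).congr
    fun t ht => ?_
  rw [uIcc_of_le hab] at ht
  exact (hf t ht).symm

theorem absolutelyContinuousOnInterval_of_hasDerivAt (hab : a ≤ b) {f f' : ℝ → ℝ}
    (hf : ∀ t ∈ Icc a b, HasDerivAt f (f' t) t) (hf' : IntervalIntegrable f' volume a b) :
    AbsolutelyContinuousOnInterval f a b := by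
  refine absolutelyContinuousOnInterval_of_eq_add_integral hab hf' fun t ht => ?_
  rw [intervalIntegral.integral_eq_sub_of_hasDerivAt
    (fun x hx => hf x (uIcc_subset_Icc ⟨le_rfl, hab⟩ ht hx))
    (hf'.mono_set (uIcc_subset_uIcc left_mem_uIcc (by rwa [uIcc_of_le hab])))]
  ring

theorem absolutelyContinuousOnInterval_fracInt (hab : a ≤ b) {β : ℝ} (hβ : 0 < β)
    {u u' : ℝ → ℝ} (hu' : IntervalIntegrable u' volume a b)
    (hu : ∀ t ∈ Icc a b, u t = u a + ∫ s in a..t, u' s) :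
    AbsolutelyContinuousOnInterval (fracInt a β u) a b := by
  have hG : IntervalIntegrable
      (fun x => u a / Real.Gamma β * (x - a) ^ (β - 1) + fracInt a β u' x) volume a b :=
    ((intervalIntegrable_rpow_sub (by linarith) a a b).const_mul _).add
      (intervalIntegrable_fracInt hab hβ
        ((intervalIntegrable_iff_integrableOn_Icc_of_le hab).1 hu'))
  refine absolutelyContinuousOnInterval_of_eq_add_integral hab hG fun t ht => ?_
  rw [fracInt_eq_integral_of_eq_add_integral hβ hu' hu ht]
  simp [fracInt]

end AbsolutelyContinuous

theorem caputoDerivR_eq_neg_fracIntR {b α t : ℝ} (htb : t ≤ b) {f f' : ℝ → ℝ}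
    (hf : ∀ τ ∈ Icc t b, HasDerivAt f (f' τ) τ) :
    caputoDerivR b α f t = -fracIntR b (1 - α) f' t := by
  rw [caputoDerivR, fracIntR, fracIntR]
  congr 2
  refine intervalIntegral.integral_congr fun τ hτ => ?_
  rw [uIcc_of_le htb] at hτ
  simp only [(hf τ hτ).deriv]

theorem fractional_green_riemann_1d_general (a b α : ℝ) (hab : a < b)
    (hα1 : α < 1) (u u' v v' : ℝ → ℝ)
    (hu'int : IntervalIntegrable u' volume a b)
    (huAC : ∀ t ∈ Set.Icc a b, u t = u a + ∫ s in a..t, u' s)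
    (hv : ∀ t ∈ Set.Icc a b, HasDerivAt v (v' t) t)
    (hv' : ContinuousOn v' (Set.Icc a b))
    (hvb : v b = 0) :
    ∫ x in a..b, u x * caputoDerivR b α v x = ∫ x in a..b, rlDeriv a α u x * v x := by
  have hβ : 0 < 1 - α := sub_pos.2 hα1
  have hu : IntegrableOn u (Icc a b) := by
    rw [← uIcc_of_le hab.le]
    exact (absolutelyContinuousOnInterval_of_eq_add_integral hab.le hu'int huAC).continuousOn
      |>.integrableOn_compact isCompact_uIcc
  have hv'int : IntervalIntegrable v' volume a b :=
    (hv'.mono (uIcc_of_le hab.le).subset).intervalIntegrable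
  obtain ⟨C, hC⟩ := isCompact_Icc.exists_bound_of_continuousOn hv'
  calc ∫ x in a..b, u x * caputoDerivR b α v x
      = -∫ x in a..b, u x * fracIntR b (1 - α) v' x := by
        rw [← intervalIntegral.integral_neg]
        refine intervalIntegral.integral_congr fun x hx => ?_
        rw [uIcc_of_le hab.le] at hx
        rw [caputoDerivR_eq_neg_fracIntR hx.2 fun τ hτ => hv τ ⟨hx.1.trans hτ.1, hτ.2⟩, mul_neg]
    _ = -∫ x in a..b, fracInt a (1 - α) u x * deriv v x := by
        rw [integral_mul_fracIntR hab.le hβ hu (hv'.aestronglyMeasurable measurableSet_Icc) hC]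
        congr 1
        refine intervalIntegral.integral_congr fun x hx => ?_
        rw [uIcc_of_le hab.le] at hx
        simp only [(hv x hx).deriv]
    _ = ∫ x in a..b, rlDeriv a α u x * v x := by
        rw [(absolutelyContinuousOnInterval_fracInt hab.le hβ hu'int huAC)
          |>.integral_mul_deriv_eq_deriv_mul
            (absolutelyContinuousOnInterval_of_hasDerivAt hab.le hv hv'int), hvb]
        simp [fracInt, rlDeriv]

/-- fractional Green-Riemann formula in 1D:
`∫ u ᶜD₋^α v = ∫ (D₊^α u) v` for `u ∈ AC¹([a,b])`, `v ∈ C¹₀([a,b])`. -/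
theorem fractional_green_riemann_1d (a b α : ℝ) (hab : a < b)
    (hα0 : 0 < α) (hα1 : α < 1) (u u' v v' : ℝ → ℝ)
    (hu'int : IntervalIntegrable u' volume a b)
    (huAC : ∀ t ∈ Set.Icc a b, u t = u a + ∫ s in a..t, u' s)
    (hv : ∀ t ∈ Set.Icc a b, HasDerivAt v (v' t) t)
    (hv' : ContinuousOn v' (Set.Icc a b))
    (hva : v a = 0) (hvb : v b = 0) :
    ∫ x in a..b, u x * caputoDerivR b α v x = ∫ x in a..b, rlDeriv a α u x * v x :=
  fractional_green_riemann_1d_general a b α hab hα1 u u' v v' hu'int huAC hv hv' hvb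
end
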